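/- arXiv:0904.1054 — 3 statements merged into one kernel-verified Lean document; each statement's English description precedes it below -/
import Mathlib

section
/- Let a, m, h, s be complex numbers with m ≠ 0, h ≠ 0, s² = 3(1 + 27a²m²) and h³ = −1 − 54a²m² + 6·a·m·s. Define r₁ = (1/(6m))(1 − h − h⁻¹), r₂ = (1/(6m))(1 + (1 + i√3)/(2h) + (1 − i√3)h/2), r₃ = (1/(6m))(1 + (1 − i√3)/(2h) + (1 + i√3)h/2). Then for every complex number r: (r − r₁)(r − r₂)(r − r₃) = −(1/(2m))·(r² − 2mr³ + a²). -/
/-!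
With `ω = (-1 + i√3)/2` and `ω' = ω² = (-1 - i√3)/2`, the three roots are `rₖ = (1 - yₖ)/(6m)`
where `y₁ = h + h⁻¹`, `y₂ = ωh + ω'h⁻¹`, `y₃ = ω'h + ωh⁻¹` are Cardano's roots of
`y³ - 3y - (h³ + h⁻³)`. The hypothesis on `s` makes `h³` and `-1 - 54a²m² - 6ams` reciprocal,
so `h³ + h⁻³ = -2 - 108a²m²`, and substituting `y = 1 - 6mr` turns this cubic into
`108m²(r² - 2mr³ + a²)`.
-/

open Complex

theorem cardano_factorization {R : Type*} [CommRing R] {ω ω' : R} (hsum : ω + ω' = -1)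
    (hprod : ω * ω' = 1) (x u v : R) :
    (x - (u + v)) * (x - (ω * u + ω' * v)) * (x - (ω' * u + ω * v)) =
      x ^ 3 - 3 * (u * v) * x - (u ^ 3 + v ^ 3) := by
  linear_combination
    (-(u + v) * x ^ 2 + ((u + v) ^ 2 + (ω + ω' - 1) * u * v) * x - (u + v) * (ω + ω' - 1) * u * v) *
      hsum + ((u - v) ^ 2 * x - (u + v) * (u - v) ^ 2) * hprod

theorem Complex.cubeRootOfUnity_add :
    (-1 + I * (Real.sqrt 3 : ℂ)) / 2 + (-1 - I * (Real.sqrt 3 : ℂ)) / 2 = -1 := by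
  ring

theorem Complex.cubeRootOfUnity_mul :
    (-1 + I * (Real.sqrt 3 : ℂ)) / 2 * ((-1 - I * (Real.sqrt 3 : ℂ)) / 2) = 1 := by
  have h3 : (Real.sqrt 3 : ℂ) ^ 2 = 3 := by
    rw [← ofReal_pow, Real.sq_sqrt (by norm_num)]; norm_num
  linear_combination (-I ^ 2 / 4) * h3 - (3 / 4 : ℂ) * I_sq

theorem pow_three_add_inv_pow_three {K : Type*} [Field K] {h b d : K} (hh : h ^ 3 = b + d)
    (hbd : b ^ 2 - d ^ 2 = 1) : h ^ 3 + h⁻¹ ^ 3 = 2 * b := by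
  have hrecip : h ^ 3 * (b - d) = 1 := by rw [hh]; linear_combination hbd
  have hinv : h⁻¹ ^ 3 = b - d := by rw [inv_pow, inv_eq_of_mul_eq_one_right hrecip]
  rw [hh, hinv]
  ring

/-- Let `a, m, h, s` be complex numbers with `m ≠ 0`, `h ≠ 0`,
`s² = 3(1 + 27a²m²)` and `h³ = −1 − 54a²m² + 6·a·m·s`. Define
`r₁ = (1/(6m))(1 − h − h⁻¹)`,
`r₂ = (1/(6m))(1 + (1 + i√3)/(2h) + (1 − i√3)h/2)`,
`r₃ = (1/(6m))(1 + (1 − i√3)/(2h) + (1 + i√3)h/2)`.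
Then for every complex `r`:
`(r − r₁)(r − r₂)(r − r₃) = −(1/(2m))·(r² − 2mr³ + a²)`. -/
theorem stmt_3 (a m h s : ℂ) (hm : m ≠ 0) (hh0 : h ≠ 0)
    (hs : s ^ 2 = 3 * (1 + 27 * a ^ 2 * m ^ 2))
    (hh : h ^ 3 = -1 - 54 * a ^ 2 * m ^ 2 + 6 * a * m * s)
    (r₁ r₂ r₃ : ℂ)
    (hr₁ : r₁ = (1 / (6 * m)) * (1 - h - h⁻¹))
    (hr₂ : r₂ = (1 / (6 * m)) *
      (1 + (1 + I * (Real.sqrt 3 : ℂ)) / (2 * h) + (1 - I * (Real.sqrt 3 : ℂ)) * h / 2))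
    (hr₃ : r₃ = (1 / (6 * m)) *
      (1 + (1 - I * (Real.sqrt 3 : ℂ)) / (2 * h) + (1 + I * (Real.sqrt 3 : ℂ)) * h / 2)) :
    ∀ r : ℂ, (r - r₁) * (r - r₂) * (r - r₃) = -(1 / (2 * m)) * (r ^ 2 - 2 * m * r ^ 3 + a ^ 2) := by
  intro r
  set ω : ℂ := (-1 + I * (Real.sqrt 3 : ℂ)) / 2
  set ω' : ℂ := (-1 - I * (Real.sqrt 3 : ℂ)) / 2
  have hroots : (r - r₁) * (r - r₂) * (r - r₃) =
      -((1 - 6 * m * r - (h + h⁻¹)) * (1 - 6 * m * r - (ω * h + ω' * h⁻¹)) *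
        (1 - 6 * m * r - (ω' * h + ω * h⁻¹))) / (6 * m) ^ 3 := by
    rw [hr₁, hr₂, hr₃]
    field_simp
    ring
  rw [hroots, cardano_factorization cubeRootOfUnity_add cubeRootOfUnity_mul,
    mul_inv_cancel₀ hh0,
    pow_three_add_inv_pow_three hh (by linear_combination -36 * a ^ 2 * m ^ 2 * hs)]
  field_simp
  ring
end

section
/- Let a, m be complex numbers with m ≠ 0 and 1 + 27a²m² = 0, let r₁ = −1/(6m), and let θ be a real number with 3 − 4cos²θ ≠ 0. Then the surface gravity κ = −(r₁/(r₁² + a²cos²θ))·(1 − 3m·r₁) equals 27m/(3 − 4cos²θ). -/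
/-! In the extreme case `a² = -1/(27m²)`, so at `r₁ = -1/(6m)` the factor `1 - 3mr₁` is `3/2` and
`R² = r₁² + a²cos²θ = (3 - 4cos²θ)/(108m²)`; the value of `κ` is then a matter of clearing
denominators. -/

section ExtremeDarkMatter

variable {K : Type*} [Field K] [CharZero K] {a m : K}

lemma sq_eq_of_extreme (hm : m ≠ 0) (hext : 1 + 27 * a ^ 2 * m ^ 2 = 0) :
    a ^ 2 = -1 / (27 * m ^ 2) := by
  field_simp
  linear_combination hext

lemma horizon_sq_add_eq_of_extreme (hm : m ≠ 0) (hext : 1 + 27 * a ^ 2 * m ^ 2 = 0) (c : K) :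
    (-1 / (6 * m)) ^ 2 + a ^ 2 * c ^ 2 = (3 - 4 * c ^ 2) / (108 * m ^ 2) := by
  rw [sq_eq_of_extreme hm hext]
  field_simp
  ring

theorem surfaceGravity_eq_of_extreme (hm : m ≠ 0) (hext : 1 + 27 * a ^ 2 * m ^ 2 = 0) {c : K}
    (hc : 3 - 4 * c ^ 2 ≠ 0) :
    -(-1 / (6 * m) / ((-1 / (6 * m)) ^ 2 + a ^ 2 * c ^ 2)) * (1 - 3 * m * (-1 / (6 * m))) =
      27 * m / (3 - 4 * c ^ 2) := by
  rw [horizon_sq_add_eq_of_extreme hm hext]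
  field_simp
  ring

end ExtremeDarkMatter

/-- Let `a, m` be complex numbers with `m ≠ 0` and `1 + 27a²m² = 0`, let
`r₁ = −1/(6m)`, and let `θ` be a real number with `3 − 4cos²θ ≠ 0`. Then the
surface gravity `κ = −(r₁/(r₁² + a²cos²θ))·(1 − 3m·r₁)` equals `27m/(3 − 4cos²θ)`. -/
theorem stmt_7 (a m : ℂ) (hm : m ≠ 0) (hext : 1 + 27 * a ^ 2 * m ^ 2 = 0)
    (r₁ : ℂ) (hr₁ : r₁ = -1 / (6 * m))
    (θ : ℝ) (hθ : 3 - 4 * Real.cos θ ^ 2 ≠ 0)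
    (κ : ℂ)
    (hκ : κ = -(r₁ / (r₁ ^ 2 + a ^ 2 * (Real.cos θ : ℂ) ^ 2)) * (1 - 3 * m * r₁)) :
    κ = 27 * m / (3 - 4 * (Real.cos θ : ℂ) ^ 2) := by
  have hc : (3 : ℂ) - 4 * (Real.cos θ : ℂ) ^ 2 ≠ 0 := by exact_mod_cast hθ
  subst hr₁ hκ
  exact surfaceGravity_eq_of_extreme hm hext hc
end

section
/- Let a, m, K, r, θ be real numbers with m > 0, r > 0, K > 0, and set R² = r² + a²cos²θ. Then the pressure p = −2rm(r² + 3a²cos²θ)/(K·R²·R²) is negative; hence the strong energy condition (p ≥ 0 and ρ + p ≥ 0) is violated by the rotating dark matter solution. -/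
theorem stmt_12_general (a m K r θ : ℝ) (hm : 0 < m) (hr : 0 < r) (hK : 0 < K)
    (R2 : ℝ) (hR2 : R2 = r ^ 2 + a ^ 2 * Real.cos θ ^ 2)
    (ρ p : ℝ)
    (hp : p = -2 * r * m * (r ^ 2 + 3 * a ^ 2 * Real.cos θ ^ 2) / (K * R2 * R2)) :
    p < 0 ∧ ¬(0 ≤ p ∧ 0 ≤ ρ + p) := by
  have hR2_pos : 0 < R2 := hR2 ▸ by positivity
  have hnum_pos : 0 < 2 * r * m * (r ^ 2 + 3 * a ^ 2 * Real.cos θ ^ 2) := by positivity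
  have hp_neg : p < 0 := hp ▸ div_neg_of_neg_of_pos (by linarith) (by positivity)
  exact ⟨hp_neg, fun h => h.1.not_gt hp_neg⟩

/-- Let `a, m, K, r, θ` be real numbers with `m > 0`, `r > 0`, `K > 0`, and set
`R² = r² + a²cos²θ`. Then the pressure `p = −2rm(r² + 3a²cos²θ)/(K·R²·R²)` is
negative; hence the strong energy condition (`p ≥ 0` and `ρ + p ≥ 0`) is
violated by the rotating dark matter solution. -/
theorem stmt_12 (a m K r θ : ℝ) (hm : 0 < m) (hr : 0 < r) (hK : 0 < K)
    (R2 : ℝ) (hR2 : R2 = r ^ 2 + a ^ 2 * Real.cos θ ^ 2)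
    (ρ p : ℝ)
    (hρ : ρ = 4 * r ^ 3 * m / (K * R2 * R2))
    (hp : p = -2 * r * m * (r ^ 2 + 3 * a ^ 2 * Real.cos θ ^ 2) / (K * R2 * R2)) :
    p < 0 ∧ ¬(0 ≤ p ∧ 0 ≤ ρ + p) :=
  stmt_12_general a m K r θ hm hr hK R2 hR2 ρ p hp
end
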